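/- arXiv:2206.04402 — 2 statements merged into one kernel-verified Lean document; each statement's English description precedes it below -/
import Mathlib

section
/- For n,k ≥ 0 we have k!/(n+kr)! · S_{2,λ}^{[r]}(n+kr, kr) = ∑ S_{2,λ}^{[r]}(j₁+r,r) S_{2,λ}^{[r]}(j₂+r,r) ⋯ S_{2,λ}^{[r]}(j_k+r,r) / ((j₁+r)!(j₂+r)!⋯(j_k+r)!), where the sum runs over all nonnegative integer tuples (j₁,…,j_k) with j₁+⋯+j_k = n. -/
/-- Degenerate falling factorial `(x)_{n,μ} = ∏_{j=0}^{n-1} (x - jμ)`. -/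
noncomputable def dfall (x mu : ℝ) (n : ℕ) : ℝ := ∏ j ∈ Finset.range n, (x - j * mu)

/-- The degenerate exponential `e_λ^x(t) = (1+λt)^{x/λ} = ∑_n (x)_{n,λ} t^n/n!`
as a formal power series. -/
noncomputable def degExpPS (lam x : ℝ) : PowerSeries ℝ :=
  PowerSeries.mk fun n => dfall x lam n / n.factorial

/-- The truncation `∑_{l=0}^{r-1} (1)_{l,λ} t^l / l!`. -/
noncomputable def truncPoly (lam : ℝ) (r : ℕ) : PowerSeries ℝ :=
  ∑ l ∈ Finset.range r, PowerSeries.C (R := ℝ) (dfall 1 lam l / l.factorial) * PowerSeries.X ^ l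

/-- The `r`-truncated degenerate Stirling numbers of the second kind `S_{2,λ}^{[r]}(n, kr)`,
defined by `(1/k!)(e_λ(t) - ∑_{l<r} (1)_{l,λ} t^l/l!)^k = ∑_n S_{2,λ}^{[r]}(n,kr) t^n/n!`
(the coefficients below `n = kr` vanish automatically). -/
noncomputable def truncS (lam : ℝ) (r k n : ℕ) : ℝ :=
  n.factorial * ((k.factorial : ℝ)⁻¹ *
    PowerSeries.coeff n ((degExpPS lam 1 - truncPoly lam r) ^ k))

/-- The degenerate Stirling numbers of the second kind `S_{2,λ}(n,k)`, defined by
`(1/k!)(e_λ(t)-1)^k = ∑_{n≥k} S_{2,λ}(n,k) t^n/n!`. -/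
noncomputable def S2 (lam : ℝ) (n k : ℕ) : ℝ :=
  n.factorial * ((k.factorial : ℝ)⁻¹ * PowerSeries.coeff n ((degExpPS lam 1 - 1) ^ k))

noncomputable def shiftG (lam : ℝ) (r : ℕ) : PowerSeries ℝ :=
  PowerSeries.mk fun m => dfall 1 lam (m + r) / (m + r).factorial

lemma F_eq (lam : ℝ) (r : ℕ) :
    degExpPS lam 1 - truncPoly lam r = PowerSeries.X ^ r * shiftG lam r := by
  ext n
  rw [PowerSeries.coeff_X_pow_mul']
  simp only [map_sub, degExpPS, PowerSeries.coeff_mk, truncPoly, map_sum,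
    PowerSeries.coeff_C_mul, PowerSeries.coeff_X_pow, mul_ite, mul_one, mul_zero, shiftG]
  rw [Finset.sum_ite_eq]
  rcases lt_or_ge n r with h | h
  · rw [if_pos (Finset.mem_range.2 h), if_neg (by omega), sub_self]
  · rw [if_neg (by simp; omega), if_pos h, Nat.sub_add_cancel h, sub_zero]

lemma coeff_F (lam : ℝ) (r j : ℕ) :
    PowerSeries.coeff (j + r) (degExpPS lam 1 - truncPoly lam r) =
      PowerSeries.coeff j (shiftG lam r) := by
  rw [F_eq, PowerSeries.coeff_X_pow_mul]

/-- Theorem 3: `k!/(n+kr)! · S_{2,λ}^{[r]}(n+kr,kr)` as a convolution of the `k = 1` numbers. -/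
theorem truncS_convolution (lam : ℝ) (hlam : lam ≠ 0) (r : ℕ) (hr : 0 < r) (n k : ℕ) :
    (k.factorial : ℝ) / ((n + k * r).factorial : ℝ) * truncS lam r k (n + k * r) =
      ∑ j ∈ Finset.Nat.antidiagonalTuple k n,
        ∏ i, truncS lam r 1 (j i + r) / ((j i + r).factorial : ℝ) := by
  have hfac : ∀ m : ℕ, ((m.factorial : ℝ)) ≠ 0 := fun m => Nat.cast_ne_zero.2 m.factorial_ne_zero
  have hL : (k.factorial : ℝ) / ((n + k * r).factorial : ℝ) * truncS lam r k (n + k * r) =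
      PowerSeries.coeff (n + k * r) ((degExpPS lam 1 - truncPoly lam r) ^ k) := by
    rw [truncS]
    field_simp
  rw [hL, F_eq, mul_pow, ← pow_mul, mul_comm r k, PowerSeries.coeff_X_pow_mul]
  have hR : ∀ j : ℕ, truncS lam r 1 (j + r) / ((j + r).factorial : ℝ) =
      PowerSeries.coeff j (shiftG lam r) := by
    intro j
    rw [truncS, pow_one, ← coeff_F]
    field_simp
    simp
  simp only [hR]
  -- now: coeff n (G^k) = sum over antidiagonalTuple
  rw [show (shiftG lam r) ^ k = ∏ _i : Fin k, shiftG lam r by simp,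
    PowerSeries.coeff_prod]
  refine Finset.sum_nbij' (fun l => fun i => l i) (fun j => Finsupp.equivFunOnFinite.symm j)
    ?_ ?_ ?_ ?_ ?_
  · intro l hl
    simp only [Finset.mem_finsuppAntidiag] at hl
    simp [Finset.Nat.mem_antidiagonalTuple, ← hl.1]
  · intro j hj
    simp only [Finset.Nat.mem_antidiagonalTuple] at hj
    simp only [Finset.mem_finsuppAntidiag]
    constructor
    · rw [← hj]; simp [Finsupp.sum]
    · exact Finset.subset_univ _
  · intro l _; ext i; simp
  · intro j _; rfl
  · intro l _; rfl
end

section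
/- For n ≥ 0, K_{n,λ}(1,1,…) = ∑_{k=0}^{n} (-1)^k k! S_{2,λ}(n,k), where K_{n,λ} are the coefficients of the reciprocal of the degenerate exponential series: 1/(∑_{m≥0} (1)_{m,λ} x_m t^m/m!) = ∑_{n≥0} K_{n,λ}(x₁,x₂,…) t^n/n! with x₀=1; i.e., the n-th coefficient (times n!) of 1/e_λ(t) equals ∑_{k=0}^{n} (-1)^k k! S_{2,λ}(n,k). -/
/-- `K_{n,λ}(1,1,…)`, i.e. `n!` times the `n`-th coefficient of the reciprocal power series
`1/e_λ(t)`, equals `∑_{k=0}^n (-1)^k k! S_{2,λ}(n,k)`. -/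
theorem coeff_inv_degExp_eq (lam : ℝ) (hlam : lam ≠ 0) (n : ℕ) :
    (n.factorial : ℝ) * PowerSeries.coeff n (degExpPS lam 1)⁻¹ =
      ∑ k ∈ Finset.range (n + 1), (-1 : ℝ) ^ k * (k.factorial : ℝ) * S2 lam n k := by
  set e := degExpPS lam 1 with he
  set f := e - 1 with hfdef
  have hc : PowerSeries.constantCoeff (R := ℝ) e = 1 := by
    rw [← PowerSeries.coeff_zero_eq_constantCoeff]
    simp [he, degExpPS, dfall]
  have hf0 : PowerSeries.constantCoeff (R := ℝ) f = 0 := by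
    simp [hfdef, hc]
  have hmul : e * e⁻¹ = 1 := PowerSeries.mul_inv_cancel e (by rw [hc]; exact one_ne_zero)
  -- geometric series identity
  have hgeom : e * (∑ k ∈ Finset.range (n + 1), (-f) ^ k) = 1 - (-f) ^ (n + 1) := by
    have := geom_sum_mul (-f) (n + 1)
    have he1 : e = 1 + f := by ring
    calc e * (∑ k ∈ Finset.range (n + 1), (-f) ^ k)
        = -((∑ k ∈ Finset.range (n + 1), (-f) ^ k) * (-f - 1)) := by rw [he1]; ring
      _ = -((-f) ^ (n + 1) - 1) := by rw [this]
      _ = 1 - (-f) ^ (n + 1) := by ring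
  have hinv : e⁻¹ = (∑ k ∈ Finset.range (n + 1), (-f) ^ k) + (-f) ^ (n + 1) * e⁻¹ := by
    calc e⁻¹ = e⁻¹ * 1 := (mul_one _).symm
      _ = e⁻¹ * (e * (∑ k ∈ Finset.range (n + 1), (-f) ^ k) + (-f) ^ (n + 1)) := by
          rw [hgeom]; ring
      _ = (e * e⁻¹) * (∑ k ∈ Finset.range (n + 1), (-f) ^ k) + (-f) ^ (n + 1) * e⁻¹ := by ring
      _ = (∑ k ∈ Finset.range (n + 1), (-f) ^ k) + (-f) ^ (n + 1) * e⁻¹ := by rw [hmul]; ring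
  have hzero : PowerSeries.coeff n ((-f) ^ (n + 1) * e⁻¹) = 0 := by
    have hX : PowerSeries.X ∣ (-f) := by
      rw [PowerSeries.X_dvd_iff]; simp [hf0]
    have hdvd : (PowerSeries.X : PowerSeries ℝ) ^ (n + 1) ∣ (-f) ^ (n + 1) * e⁻¹ :=
      dvd_mul_of_dvd_left (pow_dvd_pow_of_dvd hX _) _
    exact (PowerSeries.X_pow_dvd_iff.mp hdvd) n (Nat.lt_succ_self n)
  have hcoeff : PowerSeries.coeff n e⁻¹ =
      ∑ k ∈ Finset.range (n + 1), (-1 : ℝ) ^ k * PowerSeries.coeff n (f ^ k) := by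
    rw [hinv, map_add, hzero, add_zero, map_sum]
    refine Finset.sum_congr rfl fun k _ => ?_
    rw [neg_pow]
    have : ((-1 : PowerSeries ℝ)) ^ k = PowerSeries.C (R := ℝ) ((-1 : ℝ) ^ k) := by
      rw [map_pow, map_neg, map_one]
    rw [this, PowerSeries.coeff_C_mul]
  rw [hcoeff, Finset.mul_sum]
  refine Finset.sum_congr rfl fun k _ => ?_
  have hk : (k.factorial : ℝ) ≠ 0 := Nat.cast_ne_zero.mpr k.factorial_ne_zero
  simp only [S2]
  field_simp
  ring
end
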